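/- For n = 5, there exists ε > 0 such that for all real l, l̃ with |l − 1.01| < ε and |l̃ − 1| < ε, the set of positive solutions (x, x̃) of the 5-gonal Siamese system with parameters (l, l̃) has exactly one element. (Geometrically: there is an open set of parameter pairs giving rise to one-isomeric pentagonal Siamese dipyramids.) -/
import Mathlib
set_option maxHeartbeats 1600000

/-- `(x, x̃) = p` is a positive solution of the `5`-gonal Siamese system with
parameters `(l, l̃)`. -/
def SiamesePosSol5 (l lt : ℝ) (p : ℝ × ℝ) : Prop :=
  0 < p.1 ∧ p.1 < 1 ∧ 0 < p.2 ∧ p.2 < 1 ∧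
  l ≤ 2 * Real.sqrt (1 - p.1 ^ 2) ∧ lt ≤ 2 * Real.sqrt (1 - p.2 ^ 2) ∧
  p.2 = Real.sqrt (1 - p.1 ^ 2) *
      Real.sin (5 * Real.arcsin (l / (2 * Real.sqrt (1 - p.1 ^ 2)))) ∧
  p.1 = Real.sqrt (1 - p.2 ^ 2) *
      Real.sin (5 * Real.arcsin (lt / (2 * Real.sqrt (1 - p.2 ^ 2))))


noncomputable def Fa (l x : ℝ) : ℝ :=
  l^5 / (2*(1-x^2)^2) - 5*l^3 / (2*(1-x^2)) + 5*l/2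

lemma sin5 (θ : ℝ) :
    Real.sin (5*θ) = 16*(Real.sin θ)^5 - 20*(Real.sin θ)^3 + 5*Real.sin θ := by
  have h : (5:ℝ)*θ = θ + (θ + (θ + (θ + θ))) := by ring
  rw [h]
  simp only [Real.sin_add, Real.cos_add]
  linear_combination (5*Real.sin θ*(Real.cos θ)^2 - 15*(Real.sin θ)^3 + 5*Real.sin θ) * (Real.sin_sq_add_cos_sq θ)

lemma sin5_arcsin {s : ℝ} (h1 : -1 ≤ s) (h2 : s ≤ 1) :
    Real.sin (5 * Real.arcsin s) = 16*s^5 - 20*s^3 + 5*s := by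
  rw [sin5, Real.sin_arcsin h1 h2]

lemma trig_to_alg {l x : ℝ} (hl : 0 < l) (hx0 : 0 < x) (hx1 : x < 1)
    (hc : l ≤ 2 * Real.sqrt (1 - x^2)) :
    Real.sqrt (1-x^2) * Real.sin (5 * Real.arcsin (l / (2 * Real.sqrt (1-x^2)))) = Fa l x := by
  have hu : (0:ℝ) < 1 - x^2 := by nlinarith
  have hr : 0 < Real.sqrt (1-x^2) := Real.sqrt_pos.2 hu
  have hr2 : (Real.sqrt (1-x^2))^2 = 1 - x^2 := Real.sq_sqrt hu.le
  set r := Real.sqrt (1-x^2) with hrdef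
  have hs1 : l / (2*r) ≤ 1 := by
    rw [div_le_one (by positivity)]; linarith
  have hs0 : (-1:ℝ) ≤ l / (2*r) := by
    have : (0:ℝ) ≤ l / (2*r) := by positivity
    linarith
  rw [sin5_arcsin hs0 hs1, Fa, ← hr2]
  field_simp
  ring



lemma Fa_anti_x {l x1 x2 : ℝ} (hl1 : 0.99 ≤ l) (hl2 : l ≤ 1.02)
    (h0 : 0 ≤ x1) (h12 : x1 ≤ x2) (h2 : x2 ≤ 0.55) :
    Fa l x2 ≤ Fa l x1 := by
  have hu2 : (0.6975:ℝ) ≤ 1 - x2^2 := by nlinarith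
  have hu21 : 1 - x2^2 ≤ 1 - x1^2 := by nlinarith
  have hu1 : 1 - x1^2 ≤ 1 := by nlinarith
  have hp2 : (0:ℝ) < 1 - x2^2 := by linarith
  have hp1 : (0:ℝ) < 1 - x1^2 := by linarith
  have hfac : (0:ℝ) ≤ 5*(1-x1^2)*(1-x2^2) - l^2*((1-x1^2)+(1-x2^2)) := by nlinarith
  have hnum : (0:ℝ) ≤ ((1-x1^2)-(1-x2^2)) * l^3 * (5*(1-x1^2)*(1-x2^2) - l^2*((1-x1^2)+(1-x2^2))) :=
    mul_nonneg (mul_nonneg (by linarith) (by positivity)) hfac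
  have key : Fa l x1 - Fa l x2 =
      (((1-x1^2)-(1-x2^2)) * l^3 * (5*(1-x1^2)*(1-x2^2) - l^2*((1-x1^2)+(1-x2^2))))
        / (2*(1-x1^2)^2*(1-x2^2)^2) := by
    rw [Fa, Fa]; field_simp; ring
  have : (0:ℝ) ≤ Fa l x1 - Fa l x2 := by
    rw [key]; exact div_nonneg hnum (by positivity)
  linarith


lemma aux_quad {u S2 S4 : ℝ} (hu : 0.6975 ≤ u) (hu1 : u ≤ 1)
    (hS2 : 2.9403 ≤ S2) (hS4 : S4 ≤ 5.4125) :
    (0:ℝ) ≤ 5*u*S2 - S4 - 5*u^2 := by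
  nlinarith [mul_nonneg (sub_nonneg.2 hu) (sub_nonneg.2 hu1),
    mul_nonneg (sub_nonneg.2 hu) (sub_nonneg.2 hS2)]

lemma Fa_anti_l {l1 l2 x : ℝ} (h1 : 0.99 ≤ l1) (h12 : l1 ≤ l2) (h2 : l2 ≤ 1.02)
    (hx0 : 0 ≤ x) (hx : x ≤ 0.55) :
    Fa l2 x ≤ Fa l1 x := by
  have hu : (0.6975:ℝ) ≤ 1 - x^2 := by nlinarith
  have hu1 : 1 - x^2 ≤ 1 := by nlinarith
  have hp : (0:ℝ) < 1 - x^2 := by linarith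
  have hl1p : (0:ℝ) < l1 := by linarith
  have hl2p : (0:ℝ) ≤ l2 := by linarith
  have c2 : l2^2 ≤ 1.0404 := by nlinarith
  have e1 : l1^4 ≤ l2^4 := pow_le_pow_left₀ hl1p.le h12 4
  have e31 : l1^3 ≤ l2^3 := pow_le_pow_left₀ hl1p.le h12 3
  have e21 : l1^2 ≤ l2^2 := pow_le_pow_left₀ hl1p.le h12 2
  have e2 : l1^3*l2 ≤ l2^4 := by nlinarith
  have e3 : l1^2*l2^2 ≤ l2^4 := by nlinarith [sq_nonneg l2]
  have e4 : l1*l2^3 ≤ l2^4 := by nlinarith [pow_pos (show (0:ℝ) < l2 by linarith) 3]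
  have e5 : l2^4 ≤ 1.0825 := by
    calc l2^4 = l2^2*l2^2 := by ring
    _ ≤ 1.0404*1.0404 := mul_le_mul c2 c2 (sq_nonneg l2) (by norm_num)
    _ ≤ 1.0825 := by norm_num
  have a1 : (0.9801:ℝ) ≤ l1^2 := by nlinarith
  have a2 : (0.9801:ℝ) ≤ l1*l2 := by nlinarith
  have a3 : (0.9801:ℝ) ≤ l2^2 := by nlinarith
  have hfac : (0:ℝ) ≤ 5*(1-x^2)*(l1^2+l1*l2+l2^2) - (l1^4+l1^3*l2+l1^2*l2^2+l1*l2^3+l2^4)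
      - 5*(1-x^2)^2 := by
    have := aux_quad (S2 := l1^2+l1*l2+l2^2) (S4 := l1^4+l1^3*l2+l1^2*l2^2+l1*l2^3+l2^4)
      hu hu1 (by linarith) (by linarith)
    linarith
  have hnum : (0:ℝ) ≤ (l2 - l1) * (5*(1-x^2)*(l1^2+l1*l2+l2^2) - (l1^4+l1^3*l2+l1^2*l2^2+l1*l2^3+l2^4)
      - 5*(1-x^2)^2) := mul_nonneg (by linarith) hfac
  have key : Fa l1 x - Fa l2 x =
      ((l2 - l1) * (5*(1-x^2)*(l1^2+l1*l2+l2^2) - (l1^4+l1^3*l2+l1^2*l2^2+l1*l2^3+l2^4)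
        - 5*(1-x^2)^2)) / (2*(1-x^2)^2) := by
    rw [Fa, Fa]; field_simp; ring
  have : (0:ℝ) ≤ Fa l1 x - Fa l2 x := by
    rw [key]; exact div_nonneg hnum (by positivity)
  linarith

lemma Fa_global {l x : ℝ} (hl1 : 0.99 ≤ l) (hl2 : l ≤ 1.02)
    (hx0 : 0 ≤ x) (hx1 : x < 1) (hc : l^2 ≤ 4*(1-x^2)) :
    Fa l x ≤ 0.55 := by
  have hp : (0:ℝ) < 1 - x^2 := by nlinarith
  have hu1 : 1 - x^2 ≤ 1 := by nlinarith
  have h1 : (0:ℝ) ≤ (4*(1-x^2)-l^2)*(1-(1-x^2)) := mul_nonneg (by linarith) (by linarith)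
  have hnum : (0:ℝ) ≤ 1.1*(1-x^2)^2 - (l^5 - 5*l^3*(1-x^2) + 5*l*(1-x^2)^2) := by
    nlinarith [h1, mul_nonneg h1 (sub_nonneg.2 hl1), mul_nonneg h1 (sub_nonneg.2 hl2),
      sq_nonneg (l-1), mul_nonneg (mul_nonneg (sub_nonneg.2 hl1) (sub_nonneg.2 hl2)) hp.le,
      mul_nonneg (sq_nonneg (l-1)) hp.le,
      mul_nonneg (sq_nonneg (l-1)) (show (0:ℝ) ≤ l by linarith)]
  have key : 0.55 - Fa l x =
      (1.1*(1-x^2)^2 - (l^5 - 5*l^3*(1-x^2) + 5*l*(1-x^2)^2)) / (2*(1-x^2)^2) := by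
    rw [Fa]; field_simp; ring
  have : (0:ℝ) ≤ 0.55 - Fa l x := by
    rw [key]; exact div_nonneg hnum (by positivity)
  linarith



lemma Fa_lipF {l x1 x2 : ℝ} (hl1 : 1.009 ≤ l) (hl2 : l ≤ 1.011)
    (h1 : 0.47 ≤ x1) (h12 : x1 ≤ x2) (h2 : x2 ≤ 0.5025) :
    Fa l x1 - Fa l x2 ≤ 2.6*(x2 - x1) := by
  have hu2 : (0.74749:ℝ) ≤ 1 - x2^2 := by nlinarith
  have hu21 : 1 - x2^2 ≤ 1 - x1^2 := by nlinarith
  have hu1 : 1 - x1^2 ≤ 0.7791 := by nlinarith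
  have hu1lb : (0.74749:ℝ) ≤ 1 - x1^2 := by linarith
  have hu2ub : 1 - x2^2 ≤ 0.7791 := by linarith
  have hp2 : (0:ℝ) < 1 - x2^2 := by linarith
  have hp1 : (0:ℝ) < 1 - x1^2 := by linarith
  have hfacpos : (0:ℝ) ≤ 5*(1-x1^2)*(1-x2^2) - l^2*((1-x1^2)+(1-x2^2)) := by nlinarith
  have hfub : 5*(1-x1^2)*(1-x2^2) - l^2*((1-x1^2)+(1-x2^2)) ≤ 1.513 := by nlinarith
  have hl3 : l^3 ≤ 1.0334 := by nlinarith
  have hx12 : x1 + x2 ≤ 1.005 := by linarith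
  have s1 : (0.55874:ℝ) ≤ (1-x1^2)*(1-x2^2) := by nlinarith
  have hDlb : (0.6243:ℝ) ≤ 2*(1-x1^2)^2*(1-x2^2)^2 := by
    nlinarith [s1, sq_nonneg ((1-x1^2)*(1-x2^2) - 0.55874)]
  have hN : (x1+x2)*l^3*(5*(1-x1^2)*(1-x2^2) - l^2*((1-x1^2)+(1-x2^2)))
      ≤ 2.6*(2*(1-x1^2)^2*(1-x2^2)^2) := by
    have hb : (x1+x2)*l^3 ≤ 1.005*1.0334 := by nlinarith
    have := mul_le_mul hb hfub hfacpos (by norm_num : (0:ℝ) ≤ 1.005*1.0334)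
    nlinarith
  have key : Fa l x1 - Fa l x2 =
      ((x2-x1) * ((x1+x2)*l^3*(5*(1-x1^2)*(1-x2^2) - l^2*((1-x1^2)+(1-x2^2)))))
        / (2*(1-x1^2)^2*(1-x2^2)^2) := by
    rw [Fa, Fa]; field_simp; ring
  rw [key, div_le_iff₀ (by positivity)]
  have h21 : (0:ℝ) ≤ x2 - x1 := by linarith
  calc (x2-x1) * ((x1+x2)*l^3*(5*(1-x1^2)*(1-x2^2) - l^2*((1-x1^2)+(1-x2^2))))
      ≤ (x2-x1) * (2.6*(2*(1-x1^2)^2*(1-x2^2)^2)) := mul_le_mul_of_nonneg_left hN h21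
    _ = 2.6*(x2-x1) * (2*(1-x1^2)^2*(1-x2^2)^2) := by ring

lemma Fa_lipG {l y1 y2 : ℝ} (hl1 : 0.999 ≤ l) (hl2 : l ≤ 1.001)
    (h0 : 0 ≤ y2) (h21 : y2 ≤ y1) (h1 : y1 ≤ 0.088) :
    Fa l y2 - Fa l y1 ≤ 0.285*(y1 - y2) := by
  have hw1 : (0.99225:ℝ) ≤ 1 - y1^2 := by nlinarith
  have hw12 : 1 - y1^2 ≤ 1 - y2^2 := by nlinarith
  have hw2 : 1 - y2^2 ≤ 1 := by nlinarith
  have hw1lb : (0.99225:ℝ) ≤ 1 - y2^2 := by linarith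
  have hw1ub : 1 - y1^2 ≤ 1 := by linarith
  have hp1 : (0:ℝ) < 1 - y1^2 := by linarith
  have hp2 : (0:ℝ) < 1 - y2^2 := by linarith
  have hfacpos : (0:ℝ) ≤ 5*(1-y2^2)*(1-y1^2) - l^2*((1-y2^2)+(1-y1^2)) := by nlinarith
  have hfub : 5*(1-y2^2)*(1-y1^2) - l^2*((1-y2^2)+(1-y1^2)) ≤ 3.0195 := by nlinarith
  have hl3 : l^3 ≤ 1.00301 := by nlinarith
  have hy12 : y1 + y2 ≤ 0.176 := by linarith
  have s1 : (0.98456:ℝ) ≤ (1-y2^2)*(1-y1^2) := by nlinarith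
  have hDlb : (1.9387:ℝ) ≤ 2*(1-y2^2)^2*(1-y1^2)^2 := by
    nlinarith [s1, sq_nonneg ((1-y2^2)*(1-y1^2) - 0.98456)]
  have hN : (y2+y1)*l^3*(5*(1-y2^2)*(1-y1^2) - l^2*((1-y2^2)+(1-y1^2)))
      ≤ 0.285*(2*(1-y2^2)^2*(1-y1^2)^2) := by
    have hb : (y2+y1)*l^3 ≤ 0.176*1.00301 := by nlinarith
    have := mul_le_mul hb hfub hfacpos (by norm_num : (0:ℝ) ≤ 0.176*1.00301)
    nlinarith
  have key : Fa l y2 - Fa l y1 =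
      ((y1-y2) * ((y2+y1)*l^3*(5*(1-y2^2)*(1-y1^2) - l^2*((1-y2^2)+(1-y1^2)))))
        / (2*(1-y2^2)^2*(1-y1^2)^2) := by
    rw [Fa, Fa]; field_simp; ring
  rw [key, div_le_iff₀ (by positivity)]
  have hd : (0:ℝ) ≤ y1 - y2 := by linarith
  calc (y1-y2) * ((y2+y1)*l^3*(5*(1-y2^2)*(1-y1^2) - l^2*((1-y2^2)+(1-y1^2))))
      ≤ (y1-y2) * (0.285*(2*(1-y2^2)^2*(1-y1^2)^2)) := mul_le_mul_of_nonneg_left hN hd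
    _ = 0.285*(y1-y2) * (2*(1-y2^2)^2*(1-y1^2)^2) := by ring


lemma sol_iff {l lt : ℝ} (hl : 0 < l) (hlt : 0 < lt) (p : ℝ × ℝ) :
    SiamesePosSol5 l lt p ↔
      (0 < p.1 ∧ p.1 < 1 ∧ 0 < p.2 ∧ p.2 < 1 ∧
       l ≤ 2*Real.sqrt (1-p.1^2) ∧ lt ≤ 2*Real.sqrt (1-p.2^2) ∧
       p.2 = Fa l p.1 ∧ p.1 = Fa lt p.2) := by
  unfold SiamesePosSol5
  constructor
  · rintro ⟨h1,h2,h3,h4,h5,h6,h7,h8⟩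
    exact ⟨h1,h2,h3,h4,h5,h6, by rw [h7, trig_to_alg hl h1 h2 h5],
      by rw [h8, trig_to_alg hlt h3 h4 h6]⟩
  · rintro ⟨h1,h2,h3,h4,h5,h6,h7,h8⟩
    exact ⟨h1,h2,h3,h4,h5,h6, by rw [trig_to_alg hl h1 h2 h5]; exact h7,
      by rw [trig_to_alg hlt h3 h4 h6]; exact h8⟩

lemma sq_constraint {l x : ℝ} (hl : 0 ≤ l) (hx1 : x^2 ≤ 1)
    (h : l ≤ 2*Real.sqrt (1-x^2)) : l^2 ≤ 4*(1-x^2) := by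
  have h2 : Real.sqrt (1-x^2) ^ 2 = 1-x^2 := Real.sq_sqrt (by linarith)
  nlinarith [Real.sqrt_nonneg (1-x^2)]

lemma le_two_sqrt {l x : ℝ} (hl : l ≤ 1.72) (hx2 : x^2 ≤ 0.2604) :
    l ≤ 2*Real.sqrt (1-x^2) := by
  have h1 : Real.sqrt 0.7396 ≤ Real.sqrt (1-x^2) := Real.sqrt_le_sqrt (by linarith)
  have h2 : Real.sqrt 0.7396 = 0.86 := by
    rw [show (0.7396:ℝ) = 0.86^2 by norm_num]; exact Real.sqrt_sq (by norm_num)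
  linarith

lemma step_up {lt x y c a : ℝ} (hlt1 : 0.999 ≤ lt) (hlt2 : lt ≤ 1.001)
    (hy0 : 0 ≤ y) (hx : x = Fa lt y) (hyc : y ≤ c) (hc0 : 0 ≤ c) (hc : c ≤ 0.55)
    (heval : a ≤ Fa 1.001 c) : a ≤ x := by
  have h1 : Fa lt c ≤ Fa lt y := Fa_anti_x (by linarith) (by linarith) hy0 hyc hc
  have h2 : Fa 1.001 c ≤ Fa lt c :=
    Fa_anti_l (by linarith) (by linarith) (by norm_num) hc0 hc
  rw [hx]; linarith

lemma step_down {l x y c a : ℝ} (hl1 : 1.009 ≤ l) (hl2 : l ≤ 1.011)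
    (hy : y = Fa l x) (hax : a ≤ x) (hx55 : x ≤ 0.55) (ha0 : 0 ≤ a)
    (heval : Fa 1.009 a ≤ c) : y ≤ c := by
  have h1 : Fa l x ≤ Fa l a := Fa_anti_x (by linarith) (by linarith) ha0 hax hx55
  have h2 : Fa l a ≤ Fa 1.009 a :=
    Fa_anti_l (by norm_num) (by linarith) (by linarith) ha0 (le_trans hax hx55)
  rw [hy]; linarith

lemma sol_box {l lt x y : ℝ} (hl1 : 1.009 ≤ l) (hl2 : l ≤ 1.011)
    (hlt1 : 0.999 ≤ lt) (hlt2 : lt ≤ 1.001)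
    (hx0 : 0 < x) (hx1 : x < 1) (hy0 : 0 < y) (hy1 : y < 1)
    (hcl : l^2 ≤ 4*(1-x^2)) (hclt : lt^2 ≤ 4*(1-y^2))
    (hy : y = Fa l x) (hx : x = Fa lt y) :
    0.47 ≤ x ∧ x ≤ 0.5025 ∧ y ≤ 0.088 := by
  have hy55 : y ≤ 0.55 := by
    have := Fa_global (l := l) (x := x) (by linarith) (by linarith) hx0.le hx1 hcl
    linarith [hy ▸ this]
  have hx55 : x ≤ 0.55 := by
    have := Fa_global (l := lt) (x := y) (by linarith) (by linarith) hy0.le hy1 hclt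
    linarith [hx ▸ this]
  have hB : x ≤ 0.5025 := by
    have h1 : Fa lt y ≤ Fa lt 0 := Fa_anti_x (by linarith) (by linarith) le_rfl hy0.le hy55
    have h2 : Fa lt 0 ≤ Fa 0.999 0 :=
      Fa_anti_l (by norm_num) (by linarith) (by linarith) le_rfl (by norm_num)
    have h3 : Fa (0.999:ℝ) 0 ≤ 0.5025 := by norm_num [Fa]
    rw [hx]; linarith
  have hc0 : y ≤ (0.47730:ℝ) := step_down hl1 hl2 hy hx0.le hx55 le_rfl (by norm_num [Fa])
  have ha1 : (0.09795:ℝ) ≤ x := step_up hlt1 hlt2 hy0.le hx hc0 (by norm_num) (by norm_num) (by norm_num [Fa])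
  have hc1 : y ≤ (0.46261:ℝ) := step_down hl1 hl2 hy ha1 hx55 (by norm_num) (by norm_num [Fa])
  have ha2 : (0.12565:ℝ) ≤ x := step_up hlt1 hlt2 hy0.le hx hc1 (by norm_num) (by norm_num) (by norm_num [Fa])
  have hc2 : y ≤ (0.45302:ℝ) := step_down hl1 hl2 hy ha2 hx55 (by norm_num) (by norm_num [Fa])
  have ha3 : (0.14302:ℝ) ≤ x := step_up hlt1 hlt2 hy0.le hx hc2 (by norm_num) (by norm_num) (by norm_num [Fa])
  have hc3 : y ≤ (0.44574:ℝ) := step_down hl1 hl2 hy ha3 hx55 (by norm_num) (by norm_num [Fa])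
  have ha4 : (0.15585:ℝ) ≤ x := step_up hlt1 hlt2 hy0.le hx hc3 (by norm_num) (by norm_num) (by norm_num [Fa])
  have hc4 : y ≤ (0.43973:ℝ) := step_down hl1 hl2 hy ha4 hx55 (by norm_num) (by norm_num [Fa])
  have ha5 : (0.16620:ℝ) ≤ x := step_up hlt1 hlt2 hy0.le hx hc4 (by norm_num) (by norm_num) (by norm_num [Fa])
  have hc5 : y ≤ (0.43448:ℝ) := step_down hl1 hl2 hy ha5 hx55 (by norm_num) (by norm_num [Fa])
  have ha6 : (0.17507:ℝ) ≤ x := step_up hlt1 hlt2 hy0.le hx hc5 (by norm_num) (by norm_num) (by norm_num [Fa])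
  have hc6 : y ≤ (0.42969:ℝ) := step_down hl1 hl2 hy ha6 hx55 (by norm_num) (by norm_num [Fa])
  have ha7 : (0.18303:ℝ) ≤ x := step_up hlt1 hlt2 hy0.le hx hc6 (by norm_num) (by norm_num) (by norm_num [Fa])
  have hc7 : y ≤ (0.42517:ℝ) := step_down hl1 hl2 hy ha7 hx55 (by norm_num) (by norm_num [Fa])
  have ha8 : (0.19042:ℝ) ≤ x := step_up hlt1 hlt2 hy0.le hx hc7 (by norm_num) (by norm_num) (by norm_num [Fa])
  have hc8 : y ≤ (0.42077:ℝ) := step_down hl1 hl2 hy ha8 hx55 (by norm_num) (by norm_num [Fa])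
  have ha9 : (0.19751:ℝ) ≤ x := step_up hlt1 hlt2 hy0.le hx hc8 (by norm_num) (by norm_num) (by norm_num [Fa])
  have hc9 : y ≤ (0.41637:ℝ) := step_down hl1 hl2 hy ha9 hx55 (by norm_num) (by norm_num [Fa])
  have ha10 : (0.20449:ℝ) ≤ x := step_up hlt1 hlt2 hy0.le hx hc9 (by norm_num) (by norm_num) (by norm_num [Fa])
  have hc10 : y ≤ (0.41187:ℝ) := step_down hl1 hl2 hy ha10 hx55 (by norm_num) (by norm_num [Fa])
  have ha11 : (0.21152:ℝ) ≤ x := step_up hlt1 hlt2 hy0.le hx hc10 (by norm_num) (by norm_num) (by norm_num [Fa])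
  have hc11 : y ≤ (0.40715:ℝ) := step_down hl1 hl2 hy ha11 hx55 (by norm_num) (by norm_num [Fa])
  have ha12 : (0.21877:ℝ) ≤ x := step_up hlt1 hlt2 hy0.le hx hc11 (by norm_num) (by norm_num) (by norm_num [Fa])
  have hc12 : y ≤ (0.40211:ℝ) := step_down hl1 hl2 hy ha12 hx55 (by norm_num) (by norm_num [Fa])
  have ha13 : (0.22639:ℝ) ≤ x := step_up hlt1 hlt2 hy0.le hx hc12 (by norm_num) (by norm_num) (by norm_num [Fa])
  have hc13 : y ≤ (0.39659:ℝ) := step_down hl1 hl2 hy ha13 hx55 (by norm_num) (by norm_num [Fa])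
  have ha14 : (0.23457:ℝ) ≤ x := step_up hlt1 hlt2 hy0.le hx hc13 (by norm_num) (by norm_num) (by norm_num [Fa])
  have hc14 : y ≤ (0.39044:ℝ) := step_down hl1 hl2 hy ha14 hx55 (by norm_num) (by norm_num [Fa])
  have ha15 : (0.24351:ℝ) ≤ x := step_up hlt1 hlt2 hy0.le hx hc14 (by norm_num) (by norm_num) (by norm_num [Fa])
  have hc15 : y ≤ (0.38342:ℝ) := step_down hl1 hl2 hy ha15 hx55 (by norm_num) (by norm_num [Fa])
  have ha16 : (0.25347:ℝ) ≤ x := step_up hlt1 hlt2 hy0.le hx hc15 (by norm_num) (by norm_num) (by norm_num [Fa])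
  have hc16 : y ≤ (0.37525:ℝ) := step_down hl1 hl2 hy ha16 hx55 (by norm_num) (by norm_num [Fa])
  have ha17 : (0.26474:ℝ) ≤ x := step_up hlt1 hlt2 hy0.le hx hc16 (by norm_num) (by norm_num) (by norm_num [Fa])
  have hc17 : y ≤ (0.36554:ℝ) := step_down hl1 hl2 hy ha17 hx55 (by norm_num) (by norm_num [Fa])
  have ha18 : (0.27772:ℝ) ≤ x := step_up hlt1 hlt2 hy0.le hx hc17 (by norm_num) (by norm_num) (by norm_num [Fa])
  have hc18 : y ≤ (0.35373:ℝ) := step_down hl1 hl2 hy ha18 hx55 (by norm_num) (by norm_num [Fa])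
  have ha19 : (0.29288:ℝ) ≤ x := step_up hlt1 hlt2 hy0.le hx hc18 (by norm_num) (by norm_num) (by norm_num [Fa])
  have hc19 : y ≤ (0.33908:ℝ) := step_down hl1 hl2 hy ha19 hx55 (by norm_num) (by norm_num [Fa])
  have ha20 : (0.31078:ℝ) ≤ x := step_up hlt1 hlt2 hy0.le hx hc19 (by norm_num) (by norm_num) (by norm_num [Fa])
  have hc20 : y ≤ (0.32053:ℝ) := step_down hl1 hl2 hy ha20 hx55 (by norm_num) (by norm_num [Fa])
  have ha21 : (0.33204:ℝ) ≤ x := step_up hlt1 hlt2 hy0.le hx hc20 (by norm_num) (by norm_num) (by norm_num [Fa])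
  have hc21 : y ≤ (0.29670:ℝ) := step_down hl1 hl2 hy ha21 hx55 (by norm_num) (by norm_num [Fa])
  have ha22 : (0.35714:ℝ) ≤ x := step_up hlt1 hlt2 hy0.le hx hc21 (by norm_num) (by norm_num) (by norm_num [Fa])
  have hc22 : y ≤ (0.26593:ℝ) := step_down hl1 hl2 hy ha22 hx55 (by norm_num) (by norm_num [Fa])
  have ha23 : (0.38606:ℝ) ≤ x := step_up hlt1 hlt2 hy0.le hx hc22 (by norm_num) (by norm_num) (by norm_num [Fa])
  have hc23 : y ≤ (0.22672:ℝ) := step_down hl1 hl2 hy ha23 hx55 (by norm_num) (by norm_num [Fa])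
  have ha24 : (0.41755:ℝ) ≤ x := step_up hlt1 hlt2 hy0.le hx hc23 (by norm_num) (by norm_num) (by norm_num [Fa])
  have hc24 : y ≤ (0.17917:ℝ) := step_down hl1 hl2 hy ha24 hx55 (by norm_num) (by norm_num [Fa])
  have ha25 : (0.44821:ℝ) ≤ x := step_up hlt1 hlt2 hy0.le hx hc24 (by norm_num) (by norm_num) (by norm_num [Fa])
  have hc25 : y ≤ (0.12765:ℝ) := step_down hl1 hl2 hy ha25 hx55 (by norm_num) (by norm_num [Fa])
  have ha26 : (0.47274:ℝ) ≤ x := step_up hlt1 hlt2 hy0.le hx hc25 (by norm_num) (by norm_num) (by norm_num [Fa])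
  have hyfin : y ≤ 0.088 :=
    step_down hl1 hl2 hy (show (0.47:ℝ) ≤ x by linarith) hx55 (by norm_num) (by norm_num [Fa])
  exact ⟨by linarith, hB, hyfin⟩

lemma Fa_y_bounds {l x : ℝ} (hl1 : 1.009 ≤ l) (hl2 : l ≤ 1.011)
    (hxa : 0.47 ≤ x) (hxb : x ≤ 0.505) :
    0.01129 ≤ Fa l x ∧ Fa l x ≤ 0.08772 := by
  constructor
  · have h1 : Fa l 0.505 ≤ Fa l x :=
      Fa_anti_x (by linarith) (by linarith) (by linarith) hxb (by norm_num)
    have h2 : Fa 1.011 0.505 ≤ Fa l 0.505 :=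
      Fa_anti_l (by linarith) hl2 (by norm_num) (by norm_num) (by norm_num)
    have h3 : (0.01129:ℝ) ≤ Fa (1.011:ℝ) 0.505 := by norm_num [Fa]
    linarith
  · have h1 : Fa l x ≤ Fa l 0.47 :=
      Fa_anti_x (by linarith) (by linarith) (by norm_num) hxa (by linarith)
    have h2 : Fa l 0.47 ≤ Fa 1.009 0.47 :=
      Fa_anti_l (by norm_num) hl1 (by linarith) (by norm_num) (by norm_num)
    have h3 : Fa (1.009:ℝ) 0.47 ≤ 0.08772 := by norm_num [Fa]
    linarith

lemma exists_fixed {l lt : ℝ} (hl1 : 1.009 ≤ l) (hl2 : l ≤ 1.011)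
    (hlt1 : 0.999 ≤ lt) (hlt2 : lt ≤ 1.001) :
    ∃ x : ℝ, 0.47 ≤ x ∧ x ≤ 0.505 ∧ Fa lt (Fa l x) = x := by
  have hc1 : ContinuousOn (fun x : ℝ => Fa l x) (Set.Icc (0.47:ℝ) 0.505) := by
    unfold Fa
    refine (((continuousOn_const.div (by fun_prop) ?_).sub
      (continuousOn_const.div (by fun_prop) ?_)).add continuousOn_const)
    · intro x hx
      have : (0:ℝ) < 1-x^2 := by nlinarith [hx.1, hx.2]
      positivity
    · intro x hx
      have : (0:ℝ) < 1-x^2 := by nlinarith [hx.1, hx.2]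
      positivity
  have hcw : ContinuousOn (fun w : ℝ => Fa lt w) (Set.Icc (0.01:ℝ) 0.1) := by
    unfold Fa
    refine (((continuousOn_const.div (by fun_prop) ?_).sub
      (continuousOn_const.div (by fun_prop) ?_)).add continuousOn_const)
    · intro w hw
      have : (0:ℝ) < 1-w^2 := by nlinarith [hw.1, hw.2]
      positivity
    · intro w hw
      have : (0:ℝ) < 1-w^2 := by nlinarith [hw.1, hw.2]
      positivity
  have hmap : Set.MapsTo (fun x : ℝ => Fa l x) (Set.Icc (0.47:ℝ) 0.505) (Set.Icc (0.01:ℝ) 0.1) := by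
    intro x hx
    obtain ⟨ha, hb⟩ := Fa_y_bounds hl1 hl2 hx.1 hx.2
    exact ⟨by linarith, by linarith⟩
  have hc2 : ContinuousOn (fun x : ℝ => Fa lt (Fa l x) - x) (Set.Icc (0.47:ℝ) 0.505) :=
    (hcw.comp hc1 hmap).sub continuousOn_id
  have hfa : (0:ℝ) ≤ Fa lt (Fa l 0.47) - 0.47 := by
    obtain ⟨ha, hb⟩ := Fa_y_bounds hl1 hl2 (le_refl (0.47:ℝ)) (by norm_num)
    have h1 : Fa lt 0.08772 ≤ Fa lt (Fa l 0.47) :=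
      Fa_anti_x (by linarith) (by linarith) (by linarith) hb (by norm_num)
    have h2 : Fa 1.001 0.08772 ≤ Fa lt 0.08772 :=
      Fa_anti_l (by linarith) hlt2 (by norm_num) (by norm_num) (by norm_num)
    have h3 : (0.48587:ℝ) ≤ Fa (1.001:ℝ) 0.08772 := by norm_num [Fa]
    linarith
  have hfb : Fa lt (Fa l 0.505) - 0.505 ≤ 0 := by
    obtain ⟨ha, hb⟩ := Fa_y_bounds hl1 hl2 (by norm_num : (0.47:ℝ) ≤ 0.505) (le_refl (0.505:ℝ))
    have h1 : Fa lt (Fa l 0.505) ≤ Fa lt 0.01129 :=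
      Fa_anti_x (by linarith) (by linarith) (by norm_num) ha (by linarith)
    have h2 : Fa lt 0.01129 ≤ Fa 0.999 0.01129 :=
      Fa_anti_l (by norm_num) (by linarith) (by linarith) (by norm_num) (by norm_num)
    have h3 : Fa (0.999:ℝ) 0.01129 ≤ 0.50231 := by norm_num [Fa]
    linarith
  have hsub := intermediate_value_Icc' (by norm_num : (0.47:ℝ) ≤ 0.505) hc2
  obtain ⟨x, hxmem, hfx⟩ := hsub ⟨hfb, hfa⟩
  exact ⟨x, hxmem.1, hxmem.2, by linarith [hfx, sub_eq_zero.mp hfx]⟩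

lemma x_le {l lt x1 y1 x2 y2 : ℝ} (hl1 : 1.009 ≤ l) (hl2 : l ≤ 1.011)
    (hlt1 : 0.999 ≤ lt) (hlt2 : lt ≤ 1.001)
    (hb1 : 0.47 ≤ x1) (hb2 : x2 ≤ 0.5025)
    (hb3 : 0 < y2) (hb4 : y1 ≤ 0.088)
    (hy1 : y1 = Fa l x1) (hx1 : x1 = Fa lt y1)
    (hy2 : y2 = Fa l x2) (hx2 : x2 = Fa lt y2)
    (h12 : x1 ≤ x2) : x2 ≤ x1 := by
  have hy21 : y2 ≤ y1 := by
    rw [hy1, hy2]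
    exact Fa_anti_x (by linarith) (by linarith) (by linarith) h12 (by linarith)
  have hF : Fa l x1 - Fa l x2 ≤ 2.6*(x2 - x1) := Fa_lipF hl1 hl2 hb1 h12 hb2
  have hG : Fa lt y2 - Fa lt y1 ≤ 0.285*(y1 - y2) := Fa_lipG hlt1 hlt2 hb3.le hy21 hb4
  have e1 : y1 - y2 = Fa l x1 - Fa l x2 := by rw [hy1, hy2]
  have e2 : x2 - x1 = Fa lt y2 - Fa lt y1 := by rw [hx1, hx2]
  linarith

/-- Near `(l, l̃) = (1.01, 1)` there is an open set of parameter pairs giving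
exactly one pentagonal Siamese dipyramid. -/
theorem siamese_one_isomeric_open :
    ∃ ε > (0:ℝ), ∀ l lt : ℝ, |l - 1.01| < ε → |lt - 1| < ε →
      {p : ℝ × ℝ | SiamesePosSol5 l lt p}.encard = 1 := by
  refine ⟨0.001, by norm_num, fun l lt hl hlt => ?_⟩
  rw [abs_lt] at hl hlt
  have hl1 : (1.009:ℝ) ≤ l := by linarith [hl.1]
  have hl2 : l ≤ 1.011 := by linarith [hl.2]
  have hlt1 : (0.999:ℝ) ≤ lt := by linarith [hlt.1]
  have hlt2 : lt ≤ 1.001 := by linarith [hlt.2]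
  have hlpos : (0:ℝ) < l := by linarith
  have hltpos : (0:ℝ) < lt := by linarith
  obtain ⟨x0, hxa, hxb, hfix⟩ := exists_fixed hl1 hl2 hlt1 hlt2
  obtain ⟨hya, hyb⟩ := Fa_y_bounds hl1 hl2 hxa hxb
  set y0 := Fa l x0 with hy0def
  have hp : SiamesePosSol5 l lt (x0, y0) := by
    rw [sol_iff hlpos hltpos]
    refine ⟨by norm_num; linarith, by norm_num; linarith, by norm_num; linarith,
      by norm_num; linarith, ?_, ?_, rfl, hfix.symm⟩
    · exact le_two_sqrt (by norm_num; linarith) (by norm_num; nlinarith)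
    · exact le_two_sqrt (by norm_num; linarith) (by norm_num; nlinarith)
  have hpbox : 0.47 ≤ x0 ∧ x0 ≤ 0.5025 ∧ y0 ≤ 0.088 := by
    apply sol_box hl1 hl2 hlt1 hlt2 (by linarith) (by linarith) (by linarith) (by linarith)
      (by nlinarith) (by nlinarith) rfl hfix.symm
  have key : ∀ q : ℝ × ℝ, SiamesePosSol5 l lt q → q = (x0, y0) := by
    intro q hq
    rw [sol_iff hlpos hltpos] at hq
    obtain ⟨hq1, hq2, hq3, hq4, hq5, hq6, hq7, hq8⟩ := hq
    have hqcl : l^2 ≤ 4*(1-q.1^2) := sq_constraint hlpos.le (by nlinarith) hq5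
    have hqclt : lt^2 ≤ 4*(1-q.2^2) := sq_constraint hltpos.le (by nlinarith) hq6
    obtain ⟨hqa, hqb, hqc⟩ := sol_box hl1 hl2 hlt1 hlt2 hq1 hq2 hq3 hq4 hqcl hqclt hq7 hq8
    have hx0pos : (0:ℝ) < y0 := by linarith
    have hxeq : q.1 = x0 := by
      rcases le_total q.1 x0 with h | h
      · have := x_le hl1 hl2 hlt1 hlt2 hqa hpbox.2.1 hx0pos hqc hq7 hq8 hy0def hfix.symm h
        linarith
      · have := x_le hl1 hl2 hlt1 hlt2 hpbox.1 hqb hq3 hpbox.2.2 hy0def hfix.symm hq7 hq8 h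
        linarith
    have hyeq : q.2 = y0 := by rw [hq7, hxeq, hy0def]
    exact Prod.ext hxeq hyeq
  have hset : {p : ℝ × ℝ | SiamesePosSol5 l lt p} = {(x0, y0)} := by
    ext q
    simp only [Set.mem_setOf_eq, Set.mem_singleton_iff]
    exact ⟨key q, fun h => h ▸ hp⟩
  rw [hset]
  exact Set.encard_singleton _
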